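/- arXiv:1509.00720 — 8 statements merged into one kernel-verified Lean document; each statement's English description precedes it below -/
import Mathlib

section
/- Let p₀, p₁, …, p₆ be seven points in the Euclidean plane ℝ² such that dist(p₀, pᵢ) = 2 for all i = 1, …, 6 and dist(pᵢ, pⱼ) ≥ 2 for all 1 ≤ i < j ≤ 6. Then there exist indices 1 ≤ i < j ≤ 6 with dist(pᵢ, pⱼ) = 2. (Consequently, six unit disks tightly packed around a central unit disk force two of the outer disks to touch, so a triangle-free graph with a vertex of degree 6 has no unit disk contact representation.) -/
open Real

noncomputable def toC (x : EuclideanSpace ℝ (Fin 2)) : ℂ := ⟨x 0, x 1⟩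

lemma dist_toC (x y : EuclideanSpace ℝ (Fin 2)) : dist (toC x) (toC y) = dist x y := by
  rw [EuclideanSpace.dist_eq, Complex.dist_eq, Complex.norm_def, Complex.normSq_apply]
  congr 1
  simp [toC, Fin.sum_univ_two, Real.dist_eq, sq_abs]
  ring

lemma dist_sq_of_abs_two (z w : ℂ) (hz : ‖z‖ = 2) (hw : ‖w‖ = 2) :
    dist z w ^ 2 = 8 - 8 * Real.cos (z.arg - w.arg) := by
  have hz0 : z ≠ 0 := by intro h; simp [h] at hz
  have hw0 : w ≠ 0 := by intro h; simp [h] at hw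
  have hzr : z.re = 2 * Real.cos z.arg := by
    have := Complex.cos_arg hz0; rw [hz] at this; field_simp at this; linarith
  have hwr : w.re = 2 * Real.cos w.arg := by
    have := Complex.cos_arg hw0; rw [hw] at this; field_simp at this; linarith
  have hzi : z.im = 2 * Real.sin z.arg := by
    have := Complex.sin_arg z; rw [hz] at this; field_simp at this; linarith
  have hwi : w.im = 2 * Real.sin w.arg := by
    have := Complex.sin_arg w; rw [hw] at this; field_simp at this; linarith
  rw [Complex.dist_eq, Complex.sq_norm, Complex.normSq_sub]
  rw [Real.cos_sub, Complex.normSq_apply, Complex.normSq_apply, Complex.mul_re,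
    Complex.conj_re, Complex.conj_im]
  rw [hzr, hwr, hzi, hwi]
  nlinarith [Real.sin_sq_add_cos_sq z.arg, Real.sin_sq_add_cos_sq w.arg]

lemma gap_lower {δ : ℝ} (h0 : 0 ≤ δ) (hc : Real.cos δ ≤ 1/2) : Real.pi/3 ≤ δ := by
  by_contra h
  push_neg at h
  have := Real.cos_lt_cos_of_nonneg_of_le_pi h0 (by linarith [Real.pi_pos]) h
  rw [Real.cos_pi_div_three] at this
  linarith

/-- Six unit disks tightly packed around a central unit disk: if seven points in the
plane satisfy `dist p₀ pᵢ = 2` for the six outer points and the outer points are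
pairwise at distance `≥ 2`, then two of the outer points are at distance exactly `2`. -/
theorem six_disks_around_one_touch
    (p₀ : EuclideanSpace ℝ (Fin 2)) (p : Fin 6 → EuclideanSpace ℝ (Fin 2))
    (hc : ∀ i, dist p₀ (p i) = 2)
    (hsep : ∀ i j : Fin 6, i < j → 2 ≤ dist (p i) (p j)) :
    ∃ i j : Fin 6, i < j ∧ dist (p i) (p j) = 2 := by
  set z : Fin 6 → ℂ := fun i => toC (p i) - toC p₀ with hzdef
  have habs : ∀ i, ‖z i‖ = 2 := by
    intro i
    have : ‖z i‖ = dist (toC (p i)) (toC p₀) := by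
      rw [Complex.dist_eq]
    rw [this, dist_toC, dist_comm, hc]
  have hdistz : ∀ i j, dist (z i) (z j) = dist (p i) (p j) := by
    intro i j
    rw [hzdef]
    show dist (toC (p i) - toC p₀) (toC (p j) - toC p₀) = _
    rw [dist_sub_right, dist_toC]
  set θ : Fin 6 → ℝ := fun i => (z i).arg with hθdef
  -- pairwise cosine bound
  have hsep' : ∀ i j : Fin 6, i ≠ j → 2 ≤ dist (p i) (p j) := by
    intro i j hij
    rcases hij.lt_or_gt with h | h
    · exact hsep i j h
    · rw [dist_comm]; exact hsep j i h
  have hcos : ∀ i j : Fin 6, i ≠ j → Real.cos (θ i - θ j) ≤ 1/2 := by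
    intro i j hij
    have h2 : 2 ≤ dist (z i) (z j) := by rw [hdistz]; exact hsep' i j hij
    have hsq : dist (z i) (z j) ^ 2 = 8 - 8 * Real.cos (θ i - θ j) :=
      dist_sq_of_abs_two _ _ (habs i) (habs j)
    nlinarith [dist_nonneg (x := z i) (y := z j)]
  -- sort the angles
  set σ := Tuple.sort θ with hσ
  have hmono : Monotone (θ ∘ σ) := Tuple.monotone_sort θ
  set φ : Fin 6 → ℝ := θ ∘ σ with hφ
  have hne : ∀ a b : Fin 6, a ≠ b → σ a ≠ σ b := fun a b h => fun e => h (σ.injective e)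
  have gap : ∀ a b : Fin 6, a < b → Real.pi/3 ≤ φ b - φ a := by
    intro a b hab
    refine gap_lower (by linarith [hmono hab.le]) ?_
    have := hcos (σ b) (σ a) (hne b a hab.ne')
    simpa [hφ] using this
  have g01 := gap 0 1 (by decide)
  have g12 := gap 1 2 (by decide)
  have g23 := gap 2 3 (by decide)
  have g34 := gap 3 4 (by decide)
  have g45 := gap 4 5 (by decide)
  -- the wrap-around gap
  have hle : φ 5 ≤ Real.pi := Complex.arg_le_pi _
  have hgt : -Real.pi < φ 0 := Complex.neg_pi_lt_arg _
  set δ := 2 * Real.pi - (φ 5 - φ 0) with hδ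
  have hδ0 : 0 ≤ δ := by simp only [hδ]; linarith
  have hδle : δ ≤ Real.pi / 3 := by simp only [hδ]; linarith
  have hcosδ : Real.cos δ = Real.cos (φ 5 - φ 0) := by
    rw [hδ, Real.cos_two_pi_sub]
  have hcos50 : Real.cos (φ 5 - φ 0) ≤ 1/2 := by
    have := hcos (σ 5) (σ 0) (hne 5 0 (by decide))
    simpa [hφ] using this
  have hcosδ' : (1:ℝ)/2 ≤ Real.cos δ := by
    calc (1:ℝ)/2 = Real.cos (Real.pi/3) := (Real.cos_pi_div_three).symm
    _ ≤ Real.cos δ := by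
        rcases eq_or_lt_of_le hδle with h | h
        · rw [h]
        · exact le_of_lt (Real.cos_lt_cos_of_nonneg_of_le_pi hδ0 (by linarith [Real.pi_pos]) h)
  have hδeq : δ = Real.pi / 3 := by
    have h1 : Real.cos δ = Real.cos (Real.pi/3) := by
      rw [Real.cos_pi_div_three]; linarith [hcosδ.symm ▸ hcos50]
    exact Real.injOn_cos ⟨hδ0, by linarith [Real.pi_pos]⟩
      ⟨by positivity, by linarith [Real.pi_pos]⟩ h1
  -- all gaps equal π/3
  have g01' : φ 1 - φ 0 = Real.pi/3 := by simp only [hδ] at hδeq; linarith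
  -- conclude
  have hd : dist (z (σ 0)) (z (σ 1)) = 2 := by
    have hsq : dist (z (σ 0)) (z (σ 1)) ^ 2 = 8 - 8 * Real.cos (θ (σ 0) - θ (σ 1)) :=
      dist_sq_of_abs_two _ _ (habs _) (habs _)
    have : θ (σ 0) - θ (σ 1) = -(Real.pi/3) := by
      have : φ 0 - φ 1 = -(Real.pi/3) := by linarith
      simpa [hφ] using this
    rw [this, Real.cos_neg, Real.cos_pi_div_three] at hsq
    have h2 : dist (z (σ 0)) (z (σ 1)) ^ 2 = 2 ^ 2 := by rw [hsq]; norm_num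
    have := dist_nonneg (x := z (σ 0)) (y := z (σ 1))
    nlinarith
  have hdp : dist (p (σ 0)) (p (σ 1)) = 2 := by rw [← hdistz]; exact hd
  rcases (hne 0 1 (by decide)).lt_or_gt with h | h
  · exact ⟨σ 0, σ 1, h, hdp⟩
  · exact ⟨σ 1, σ 0, h, by rw [dist_comm]; exact hdp⟩
end

section
/- Every caterpillar with maximum degree at most 4 is a UDC graph, i.e., it admits a unit disk contact representation. -/
/-- A unit disk contact representation of a simple graph: an injective assignment of
centers such that distinct vertices have centers at distance at least `2`, with
distance exactly `2` iff the vertices are adjacent. -/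
def IsUDCRep {V : Type*} (G : SimpleGraph V) (c : V → EuclideanSpace ℝ (Fin 2)) : Prop :=
  Function.Injective c ∧
    ∀ u v : V, u ≠ v →
      2 ≤ dist (c u) (c v) ∧ (dist (c u) (c v) = 2 ↔ G.Adj u v)

/-- A graph is a unit disk contact (UDC) graph if it admits a UDC representation. -/
def IsUDCGraph {V : Type*} (G : SimpleGraph V) : Prop :=
  ∃ c : V → EuclideanSpace ℝ (Fin 2), IsUDCRep G c

/-- A caterpillar: a tree having a path (the inner path) that contains every vertex of
degree at least `2`. -/
def IsCaterpillar {V : Type*} [Fintype V] (G : SimpleGraph V) [DecidableRel G.Adj] : Prop :=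
  G.IsTree ∧ ∃ (a b : V) (p : G.Walk a b), p.IsPath ∧
    ∀ v : V, 2 ≤ G.degree v → v ∈ p.support

namespace UDCAux

noncomputable def pt (x y : ℝ) : EuclideanSpace ℝ (Fin 2) :=
  (WithLp.equiv 2 (Fin 2 → ℝ)).symm ![x, y]

lemma dist_pt (x1 y1 x2 y2 : ℝ) :
    dist (pt x1 y1) (pt x2 y2) = Real.sqrt ((x1-x2)^2 + (y1-y2)^2) := by
  rw [EuclideanSpace.dist_eq, Fin.sum_univ_two]
  norm_num [pt, Real.dist_eq, sq_abs]

lemma dist_pt_eq_two {x1 y1 x2 y2 : ℝ} (h : (x1-x2)^2 + (y1-y2)^2 = 4) :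
    dist (pt x1 y1) (pt x2 y2) = 2 := by
  rw [dist_pt, h]
  rw [show (4:ℝ) = 2^2 by norm_num, Real.sqrt_sq (by norm_num)]

lemma two_lt_dist_pt {x1 y1 x2 y2 : ℝ} (h : 4 < (x1-x2)^2 + (y1-y2)^2) :
    2 < dist (pt x1 y1) (pt x2 y2) := by
  rw [dist_pt]
  nlinarith [Real.sq_sqrt (by nlinarith : (0:ℝ) ≤ (x1-x2)^2 + (y1-y2)^2),
    Real.sqrt_nonneg ((x1-x2)^2 + (y1-y2)^2)]

lemma two_le_dist_pt {x1 y1 x2 y2 : ℝ} (h : 4 ≤ (x1-x2)^2 + (y1-y2)^2) :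
    2 ≤ dist (pt x1 y1) (pt x2 y2) := by
  rw [dist_pt]
  nlinarith [Real.sq_sqrt (by nlinarith : (0:ℝ) ≤ (x1-x2)^2 + (y1-y2)^2),
    Real.sqrt_nonneg ((x1-x2)^2 + (y1-y2)^2)]

lemma dist_pt_two_iff {x1 y1 x2 y2 : ℝ} :
    dist (pt x1 y1) (pt x2 y2) = 2 ↔ (x1-x2)^2 + (y1-y2)^2 = 4 := by
  constructor
  · intro h
    rw [dist_pt] at h
    have h0 : (0:ℝ) ≤ (x1-x2)^2 + (y1-y2)^2 := by positivity
    nlinarith [Real.sq_sqrt h0]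
  · exact dist_pt_eq_two

lemma assemble {x y : EuclideanSpace ℝ (Fin 2)} {P : Prop}
    (h1 : P → dist x y = 2) (h2 : ¬ P → 2 < dist x y) :
    2 ≤ dist x y ∧ (dist x y = 2 ↔ P) := by
  by_cases hP : P
  · exact ⟨(h1 hP).ge, ⟨fun _ => hP, fun _ => h1 hP⟩⟩
  · exact ⟨(h2 hP).le, ⟨fun hd => absurd hd (h2 hP).ne', fun hp => absurd hp hP⟩⟩

noncomputable def tt (m i : ℕ) : ℝ := i / (4 * (m+1))
noncomputable def ux (m i : ℕ) : ℝ := 2 * tt m i / (1 + tt m i ^ 2)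
noncomputable def vy (m i : ℕ) : ℝ := (1 - tt m i ^ 2) / (1 + tt m i ^ 2)

lemma tt_nonneg (m i : ℕ) : 0 ≤ tt m i := by rw [tt]; positivity
lemma tt_lt {m i : ℕ} (h : i ≤ m) : tt m i < 1/4 := by
  rw [tt, div_lt_iff₀ (by positivity)]
  nlinarith [(Nat.cast_le (α := ℝ)).mpr h]
lemma one_add_sq_pos (m i : ℕ) : 0 < 1 + tt m i ^ 2 := by positivity
lemma ux_nonneg (m i : ℕ) : 0 ≤ ux m i :=
  div_nonneg (by nlinarith [tt_nonneg m i]) (one_add_sq_pos m i).le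
lemma ux_lt_half {m i : ℕ} (h : i ≤ m) : ux m i < 1/2 := by
  have h1 := tt_lt h; have h0 := tt_nonneg m i
  rw [ux, div_lt_iff₀ (one_add_sq_pos m i)]
  nlinarith
lemma sq_add_sq (m i : ℕ) : ux m i ^ 2 + vy m i ^ 2 = 1 := by
  have := one_add_sq_pos m i
  rw [ux, vy]
  field_simp
  ring
lemma vy_gt_half {m i : ℕ} (h : i ≤ m) : 1/2 < vy m i := by
  have h1 := tt_lt h; have h0 := tt_nonneg m i
  rw [vy, lt_div_iff₀ (one_add_sq_pos m i)]
  nlinarith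
lemma vy_le_one (m i : ℕ) : vy m i ≤ 1 := by
  have h0 := tt_nonneg m i
  rw [vy, div_le_one (one_add_sq_pos m i)]
  nlinarith
lemma ux_mono {m i j : ℕ} (hij : i < j) (hj : j ≤ m) : ux m i < ux m j := by
  have h1 := tt_lt hj
  have h0 := tt_nonneg m i
  have h2 : tt m i < tt m j := by
    rw [tt, tt, div_lt_div_iff₀ (by positivity) (by positivity)]
    have : (i:ℝ) < j := by exact_mod_cast hij
    nlinarith
  rw [ux, ux, div_lt_div_iff₀ (one_add_sq_pos m i) (one_add_sq_pos m j)]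
  have h3 : 0 < (tt m j - tt m i) * (1 - tt m i * tt m j) :=
    mul_pos (by linarith) (by nlinarith)
  nlinarith [h3]

lemma RSS {i j : ℕ} (h : i ≠ j) : 4 ≤ ((2*i:ℝ) - 2*j)^2 ∧ (((2*i:ℝ) - 2*j)^2 = 4 ↔ (i + 1 = j ∨ j + 1 = i)) := by
  constructor
  · rcases Nat.lt_or_ge i j with hlt | hge
    · have : (i:ℝ) + 1 ≤ j := by exact_mod_cast hlt
      nlinarith
    · have hlt : j < i := lt_of_le_of_ne hge (Ne.symm h)
      have : (j:ℝ) + 1 ≤ i := by exact_mod_cast hlt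
      nlinarith
  · constructor
    · intro h4
      have h1 : ((i:ℝ) - j - 1) * ((i:ℝ) - j + 1) = 0 := by nlinarith
      rcases mul_eq_zero.mp h1 with h1 | h1
      · right; have : (j:ℝ) + 1 = i := by linarith
        exact_mod_cast this
      · left; have : (i:ℝ) + 1 = j := by linarith
        exact_mod_cast this
    · rintro (rfl | rfl) <;> push_cast <;> ring

lemma RSU_eq (m i : ℕ) : (((2*i:ℝ) + 2*ux m i) - 2*i)^2 + (2*vy m i - 0)^2 = 4 := by
  have := sq_add_sq m i; nlinarith

lemma RSU_ne {m i j : ℕ} (hi : i ≤ m) (h : j ≠ i) :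
    4 < ((2*j:ℝ) - ((2*i:ℝ) + 2*ux m i))^2 + (0 - 2*vy m i)^2 := by
  have h1 := ux_nonneg m i
  have h2 := ux_lt_half hi
  have h3 := sq_add_sq m i
  have h4 := vy_gt_half hi
  rcases Nat.lt_or_ge j i with hlt | hge
  · have : (j:ℝ) + 1 ≤ i := by exact_mod_cast hlt
    nlinarith
  · rcases Nat.eq_or_lt_of_le hge with rfl | hgt
    · exact absurd rfl h
    · rcases Nat.eq_or_lt_of_le hgt with heq | hgt2
      · have : (j:ℝ) = i + 1 := by exact_mod_cast heq.symm
        nlinarith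
      · have : (i:ℝ) + 2 ≤ j := by exact_mod_cast hgt2
        nlinarith

lemma RSW_ne {j : ℕ} (h : j ≠ 0) : 4 < ((2*j:ℝ) - (-2))^2 + ((0:ℝ) - 0)^2 := by
  have : (1:ℝ) ≤ j := by exact_mod_cast Nat.one_le_iff_ne_zero.mpr h
  nlinarith

lemma RSE_ne {m j : ℕ} (hj : j ≤ m) (h : j ≠ m) :
    4 < ((2*j:ℝ) - (2*m+2))^2 + ((0:ℝ) - 0)^2 := by
  have : (j:ℝ) + 1 ≤ m := by exact_mod_cast lt_of_le_of_ne hj h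
  nlinarith

lemma RUU {m i j : ℕ} (hi : i ≤ m) (hj : j ≤ m) (h : i ≠ j) :
    4 < (((2*i:ℝ) + 2*ux m i) - ((2*j:ℝ) + 2*ux m j))^2 + (2*vy m i - 2*vy m j)^2 := by
  rcases Nat.lt_or_ge i j with hlt | hge
  · have hc : (i:ℝ) + 1 ≤ j := by exact_mod_cast hlt
    have := ux_mono hlt hj
    nlinarith [sq_nonneg (2*vy m i - 2*vy m j)]
  · have hlt : j < i := lt_of_le_of_ne hge (Ne.symm h)
    have hc : (j:ℝ) + 1 ≤ i := by exact_mod_cast hlt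
    have := ux_mono hlt hi
    nlinarith [sq_nonneg (2*vy m i - 2*vy m j)]

lemma RUD {m i j : ℕ} (hi : i ≤ m) (hj : j ≤ m) :
    4 < (((2*i:ℝ) + 2*ux m i) - ((2*j:ℝ) + 2*ux m j))^2 + (2*vy m i - (-(2*vy m j)))^2 := by
  have h1 := vy_gt_half hi
  have h2 := vy_gt_half hj
  nlinarith [sq_nonneg (((2*i:ℝ) + 2*ux m i) - ((2*j:ℝ) + 2*ux m j))]

lemma RUW {m i : ℕ} (hi : i ≤ m) :
    4 < (((2*i:ℝ) + 2*ux m i) - (-2))^2 + (2*vy m i - 0)^2 := by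
  have h1 := ux_nonneg m i
  have h2 := vy_gt_half hi
  have h3 : (0:ℝ) ≤ i := Nat.cast_nonneg i
  nlinarith

lemma RUE {m i : ℕ} (hi : i ≤ m) :
    4 < (((2*i:ℝ) + 2*ux m i) - (2*m+2))^2 + (2*vy m i - 0)^2 := by
  have h1 := ux_nonneg m i
  have h2 := ux_lt_half hi
  have h3 := sq_add_sq m i
  have h4 := vy_gt_half hi
  have h5 : (i:ℝ) ≤ m := by exact_mod_cast hi
  nlinarith

lemma RWE (m : ℕ) : 4 < ((-2:ℝ) - (2*m+2))^2 + ((0:ℝ) - 0)^2 := by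
  have : (0:ℝ) ≤ m := Nat.cast_nonneg m
  nlinarith

noncomputable def upP (m i : ℕ) : EuclideanSpace ℝ (Fin 2) := pt (2*i + 2*ux m i) (2*vy m i)
noncomputable def downP (m i : ℕ) : EuclideanSpace ℝ (Fin 2) := pt (2*i + 2*ux m i) (-(2*vy m i))
noncomputable def wP : EuclideanSpace ℝ (Fin 2) := pt (-2) 0
noncomputable def eP (m : ℕ) : EuclideanSpace ℝ (Fin 2) := pt (2*m+2) 0
noncomputable def slots (m i : ℕ) : List (EuclideanSpace ℝ (Fin 2)) :=
  [upP m i, downP m i] ++ (if i = 0 then [wP] else []) ++ (if i = m then [eP m] else [])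

lemma slots_length (m i : ℕ) :
    (slots m i).length = 2 + (if i = 0 then 1 else 0) + (if i = m then 1 else 0) := by
  unfold slots
  split_ifs <;> simp

lemma slot_cases (m i k : ℕ) (hk : k < (slots m i).length) :
    (k = 0 ∧ (slots m i).getD k (pt 0 0) = upP m i) ∨
    (k = 1 ∧ (slots m i).getD k (pt 0 0) = downP m i) ∨
    (i = 0 ∧ k = 2 ∧ (slots m i).getD k (pt 0 0) = wP) ∨
    (i = m ∧ ((i = 0 ∧ k = 3) ∨ (¬ i = 0 ∧ k = 2)) ∧ (slots m i).getD k (pt 0 0) = eP m) := by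
  rw [slots_length] at hk
  unfold slots
  by_cases h0 : i = 0 <;> by_cases hm : i = m
  · subst hm; subst h0
    norm_num at hk ⊢
    interval_cases k <;> simp [List.getD]
  · subst h0
    simp only [hm] at hk ⊢
    norm_num at hk ⊢
    interval_cases k <;> simp [List.getD]
  · subst hm
    simp only [h0] at hk ⊢
    norm_num at hk ⊢
    interval_cases k <;> simp [List.getD, h0]
  · simp only [h0, hm] at hk ⊢
    norm_num at hk ⊢
    interval_cases k <;> simp [List.getD, h0, hm]

variable {V : Type*} {G : SimpleGraph V}

lemma support_get_eq_getVert {a b : V} (p : G.Walk a b) (i : ℕ) (h : i < p.support.length) :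
    p.support.get ⟨i, h⟩ = p.getVert i := by
  induction p generalizing i with
  | nil => simp at h; subst h; rfl
  | cons hadj q ih =>
    cases i with
    | zero => rfl
    | succ n =>
      simp only [SimpleGraph.Walk.support_cons, SimpleGraph.Walk.getVert_cons_succ]
      exact ih n (by simpa [SimpleGraph.Walk.length_support] using
        (by simpa [SimpleGraph.Walk.support_cons, SimpleGraph.Walk.length_support] using h :
          n < q.length + 1))

lemma getVert_inj {a b : V} {p : G.Walk a b} (hp : p.IsPath)
    {i j : ℕ} (hi : i ≤ p.length) (hj : j ≤ p.length) (h : p.getVert i = p.getVert j) :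
    i = j := by
  classical
  have hi' : i < p.support.length := by rw [p.length_support]; omega
  have hj' : j < p.support.length := by rw [p.length_support]; omega
  have hget : p.support.get ⟨i, hi'⟩ = p.support.get ⟨j, hj'⟩ := by
    rw [support_get_eq_getVert p i hi', support_get_eq_getVert p j hj']
    exact h
  have hnd := hp.support_nodup
  have := (List.Nodup.get_inj_iff hnd).mp hget
  exact congrArg Fin.val this

lemma noChord (hA : G.IsAcyclic) {a b : V} (p : G.Walk a b) (hp : p.IsPath) :
    ∀ i j : ℕ, i + 1 < j → j ≤ p.length → ¬ G.Adj (p.getVert i) (p.getVert j) := by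
  classical
  induction p with
  | nil => intro i j hij hj; simp at hj; omega
  | cons hadj q ih =>
    intro i j hij hj hAdj
    rename_i u v w
    cases i with
    | succ n =>
      cases j with
      | zero => omega
      | succ k =>
        exact ih (hp.of_cons) n k (by omega)
          (by simpa [SimpleGraph.Walk.length_cons] using hj) hAdj
    | zero =>
      rw [SimpleGraph.Walk.getVert_zero] at hAdj
      obtain ⟨j, rfl⟩ : ∃ k, j = k + 1 := ⟨j - 1, by omega⟩
      rw [SimpleGraph.Walk.getVert_cons_succ] at hAdj
      set y := q.getVert j with hy
      have hyq : y ∈ q.support := SimpleGraph.Walk.mem_support_iff_exists_getVert.mpr ⟨j, rfl, by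
        simpa [SimpleGraph.Walk.length_cons] using hj⟩
      have hqp : q.IsPath := hp.of_cons
      have hus : u ∉ q.support := (SimpleGraph.Walk.cons_isPath_iff hadj q).mp hp |>.2
      have hP2 : (SimpleGraph.Walk.cons hadj (q.takeUntil y hyq)).IsPath := by
        refine (SimpleGraph.Walk.cons_isPath_iff _ _).mpr ⟨hqp.takeUntil hyq, fun hc => hus ?_⟩
        exact q.support_takeUntil_subset hyq hc
      have hP1 : (SimpleGraph.Walk.cons hAdj (SimpleGraph.Walk.nil)).IsPath := by
        simp [SimpleGraph.Walk.cons_isPath_iff]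
        intro h; exact hus (h ▸ hyq)
      have heqP := hA.path_unique ⟨_, hP1⟩ ⟨_, hP2⟩
      have hlen : (SimpleGraph.Walk.cons hAdj (SimpleGraph.Walk.nil)).length
          = (SimpleGraph.Walk.cons hadj (q.takeUntil y hyq)).length :=
        congrArg (fun P : G.Path u y => P.1.length) heqP
      simp only [SimpleGraph.Walk.length_cons, SimpleGraph.Walk.length_nil] at hlen
      have hvy : v = y := SimpleGraph.Walk.eq_of_length_eq_zero (p := q.takeUntil y hyq) (by omega)
      have hj1 : 1 ≤ j := by omega
      cases q with
      | nil => simp [SimpleGraph.Walk.length_nil] at hj; omega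
      | cons hadj2 q2 =>
        rename_i v2
        obtain ⟨j, rfl⟩ : ∃ k, j = k + 1 := ⟨j - 1, by omega⟩
        rw [SimpleGraph.Walk.getVert_cons_succ] at hy
        have : v ∈ q2.support := by
          rw [hvy, hy]
          exact SimpleGraph.Walk.mem_support_iff_exists_getVert.mpr ⟨j, rfl, by
            by_cases hc : j ≤ q2.length
            · exact hc
            · rw [hy] at hvy; rw [SimpleGraph.Walk.getVert_of_length_le q2 (by omega)] at hvy
              simp [SimpleGraph.Walk.length_cons] at hj
              omega⟩
        exact ((SimpleGraph.Walk.cons_isPath_iff _ _).mp hqp).2 this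

end UDCAux

set_option maxHeartbeats 2000000 in
/-- Every caterpillar with maximum degree at most `4` is a UDC graph. -/
theorem caterpillar_maxDegree_le_four_isUDCGraph
    {V : Type*} [Fintype V] (G : SimpleGraph V) [DecidableRel G.Adj]
    (hcat : IsCaterpillar G) (hdeg : G.maxDegree ≤ 4) :
    IsUDCGraph G := by
  classical
  obtain ⟨htree, a, b, p, hp, hsupp⟩ := hcat
  have hacyc : G.IsAcyclic := htree.IsAcyclic
  have hconn : G.Connected := htree.isConnected
  have hdeg4 : ∀ u, G.degree u ≤ 4 := fun u => (G.degree_le_maxDegree u).trans hdeg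
  set S := p.support with hS
  have hSlen : S.length = p.length + 1 := p.length_support
  set idx : V → ℕ := fun v => S.idxOf v with hidxdef
  have hidx_le : ∀ v ∈ S, idx v ≤ p.length := by
    intro v hv
    have h1 : S.idxOf v < S.length := List.idxOf_lt_length_iff.mpr hv
    simp only [hidxdef]
    omega
  have hget : ∀ v ∈ S, p.getVert (idx v) = v := by
    intro v hv
    have h1 : S.idxOf v < S.length := List.idxOf_lt_length_iff.mpr hv
    simp only [hidxdef]
    rw [← UDCAux.support_get_eq_getVert p (S.idxOf v) h1]
    exact List.idxOf_get h1
  have hmemS : ∀ i, i ≤ p.length → p.getVert i ∈ S := by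
    intro i hi
    exact SimpleGraph.Walk.mem_support_iff_exists_getVert.mpr ⟨i, rfl, hi⟩
  have hidx_inj : ∀ u ∈ S, ∀ v ∈ S, idx u = idx v → u = v := by
    intro u hu v hv h
    rw [← hget u hu, ← hget v hv, h]
  have hadjS : ∀ u ∈ S, ∀ v ∈ S, (G.Adj u v ↔ (idx u + 1 = idx v ∨ idx v + 1 = idx u)) := by
    intro u hu v hv
    constructor
    · intro hAdj
      by_contra hcon
      push_neg at hcon
      obtain ⟨h1, h2⟩ := hcon
      have hne : idx u ≠ idx v := fun h => (G.ne_of_adj hAdj) (hidx_inj u hu v hv h)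
      rcases Nat.lt_or_ge (idx u) (idx v) with hlt | hge
      · exact UDCAux.noChord hacyc p hp (idx u) (idx v) (by omega)
          (hidx_le v hv) (by rw [hget u hu, hget v hv]; exact hAdj)
      · have hlt : idx v < idx u := by omega
        exact UDCAux.noChord hacyc p hp (idx v) (idx u) (by omega)
          (hidx_le u hu) (by rw [hget u hu, hget v hv]; exact hAdj.symm)
    · intro h
      rcases h with h | h
      · have h1 : idx u < p.length := by have := hidx_le v hv; omega
        have h2 := p.adj_getVert_succ h1
        rw [hget u hu, h, hget v hv] at h2
        exact h2
      · have h1 : idx v < p.length := by have := hidx_le u hu; omega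
        have h2 := p.adj_getVert_succ h1
        rw [hget v hv, h, hget u hu] at h2
        exact h2.symm
  -- leaf machinery
  have hex : ∀ v : V, v ≠ a → ∃ w, G.Adj v w := by
    intro v hva
    obtain ⟨q⟩ := hconn.preconnected v a
    have hlen : q.length ≠ 0 := fun h => hva (SimpleGraph.Walk.eq_of_length_eq_zero h)
    exact ⟨q.getVert 1, q.adj_snd
      (fun hn => hlen (SimpleGraph.Walk.nil_iff_length_eq.mp hn))⟩
  have hdegle1 : ∀ v, v ∉ S → G.degree v ≤ 1 := by
    intro v hv
    by_contra h
    exact hv (hsupp v (by omega))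
  have huniq : ∀ v, v ∉ S → ∀ w w', G.Adj v w → G.Adj v w' → w = w' := by
    intro v hv w w' h1 h2
    have hcard : (G.neighborFinset v).card ≤ 1 := by
      rw [G.card_neighborFinset_eq_degree]
      exact hdegle1 v hv
    exact Finset.card_le_one.mp hcard w (by simpa using h1) w' (by simpa using h2)
  set pa : V → V := fun v => if h : ∃ w, G.Adj v w then h.choose else v with hpadef
  have hpa_adj : ∀ v, v ∉ S → G.Adj v (pa v) := by
    intro v hv
    have hva : v ≠ a := fun h => hv (h ▸ p.start_mem_support)
    have hex' := hex v hva
    simp only [hpadef, dif_pos hex']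
    exact hex'.choose_spec
  have hpa_uniq : ∀ v, v ∉ S → ∀ w, G.Adj v w → w = pa v :=
    fun v hv w hw => huniq v hv w (pa v) hw (hpa_adj v hv)
  have hpa_mem : ∀ v, v ∉ S → pa v ∈ S := by
    intro v hv
    by_contra hpS
    have hadjv := hpa_adj v hv
    have hva : v ≠ a := fun h => hv (h ▸ p.start_mem_support)
    have hua : pa v ≠ a := fun h => hpS (h ▸ p.start_mem_support)
    obtain ⟨q0⟩ := hconn.preconnected a v
    have hqp : q0.toPath.1.IsPath := q0.toPath.2
    have hrp : (q0.toPath.1.reverse).IsPath := hqp.reverse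
    set r := q0.toPath.1.reverse with hr
    have hrlen : r.length ≠ 0 := fun h =>
      hva (SimpleGraph.Walk.eq_of_length_eq_zero (p := r) h)
    have hr1 : G.Adj v (r.getVert 1) :=
      r.adj_snd (fun hn => hrlen (SimpleGraph.Walk.nil_iff_length_eq.mp hn))
    have h1 : r.getVert 1 = pa v := hpa_uniq v hv _ hr1
    have hrlen2 : 2 ≤ r.length := by
      by_contra hcon
      have hl1 : r.length = 1 := by omega
      have := r.getVert_length
      rw [hl1] at this
      rw [this] at h1
      exact hua h1.symm
    have hr2 : G.Adj (pa v) (r.getVert 2) := by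
      have := r.adj_getVert_succ (i := 1) (by omega)
      rwa [h1] at this
    have h2 : r.getVert 2 = pa (pa v) := hpa_uniq (pa v) hpS _ hr2
    have h3 : v = pa (pa v) := hpa_uniq (pa v) hpS v hadjv.symm
    have h02 : r.getVert 0 = r.getVert 2 := by rw [r.getVert_zero, h2, ← h3]
    have := UDCAux.getVert_inj hrp (by omega) (by omega) h02
    omega
  set lv : V → Finset V := fun u => Finset.univ.filter (fun w => G.Adj u w ∧ w ∉ S) with hlvdef
  have hlv_mem : ∀ v, v ∉ S → v ∈ lv (pa v) := by
    intro v hv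
    simp only [hlvdef, Finset.mem_filter, Finset.mem_univ, true_and]
    exact ⟨(hpa_adj v hv).symm, hv⟩
  have hcard_le : ∀ u ∈ S, (lv u).card ≤ (UDCAux.slots p.length (idx u)).length := by
    intro u hu
    rw [UDCAux.slots_length]
    have hi := hidx_le u hu
    set PS : Finset V := (if idx u = 0 then ∅ else {p.getVert (idx u - 1)}) ∪
      (if idx u = p.length then ∅ else {p.getVert (idx u + 1)}) with hPSdef
    have hPS_sub : PS ⊆ G.neighborFinset u := by
      intro w hw
      rw [SimpleGraph.mem_neighborFinset]
      simp only [hPSdef, Finset.mem_union] at hw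
      rcases hw with hw | hw
      · by_cases h0 : idx u = 0
        · simp [h0] at hw
        · simp [h0] at hw
          subst hw
          have := p.adj_getVert_succ (i := idx u - 1) (by omega)
          rw [show idx u - 1 + 1 = idx u by omega, hget u hu] at this
          exact this.symm
      · by_cases h0 : idx u = p.length
        · simp [h0] at hw
        · simp [h0] at hw
          subst hw
          have := p.adj_getVert_succ (i := idx u) (by omega)
          rw [hget u hu] at this
          exact this
    have hlv_sub : lv u ⊆ G.neighborFinset u := by
      intro w hw
      simp only [hlvdef, Finset.mem_filter, Finset.mem_univ, true_and] at hw
      exact (SimpleGraph.mem_neighborFinset _ _ _).mpr hw.1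
    have hdisj : Disjoint (lv u) PS := by
      rw [Finset.disjoint_left]
      intro w hw hw'
      simp only [hlvdef, Finset.mem_filter, Finset.mem_univ, true_and] at hw
      apply hw.2
      simp only [hPSdef, Finset.mem_union] at hw'
      rcases hw' with hw' | hw'
      · by_cases h0 : idx u = 0
        · simp [h0] at hw'
        · simp [h0] at hw'
          subst hw'
          exact hmemS _ (by omega)
      · by_cases h0 : idx u = p.length
        · simp [h0] at hw'
        · simp [h0] at hw'
          subst hw'
          exact hmemS _ (by omega)
    have hPScard : PS.card = (if idx u = 0 then 0 else 1) + (if idx u = p.length then 0 else 1) := by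
      by_cases h0 : idx u = 0 <;> by_cases hm' : idx u = p.length
      · have e : p.length = 0 := by omega
        simp [hPSdef, h0, e]
      · have e : ¬((0:ℕ) = p.length) := by omega
        simp [hPSdef, h0, e]
      · have e : ¬(p.length = 0) := by omega
        simp [hPSdef, hm', e]
      · simp only [hPSdef, h0, hm', if_false, ite_false]
        rw [Finset.card_union_of_disjoint]
        · simp
        · simp only [Finset.disjoint_singleton_left, Finset.mem_singleton]
          intro hc
          have := UDCAux.getVert_inj hp (i := idx u - 1) (j := idx u + 1)
            (by omega) (by omega) hc
          omega
    have hunion : (lv u).card + PS.card ≤ G.degree u := by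
      rw [← Finset.card_union_of_disjoint hdisj]
      rw [← G.card_neighborFinset_eq_degree]
      exact Finset.card_le_card (Finset.union_subset hlv_sub hPS_sub)
    have := hdeg4 u
    rw [hPScard] at hunion
    split_ifs at hunion ⊢ <;> omega
  set kk : V → ℕ := fun v => (lv (pa v)).toList.idxOf v with hkkdef
  have hkk_lt : ∀ v, v ∉ S → kk v < (UDCAux.slots p.length (idx (pa v))).length := by
    intro v hv
    have h1 : v ∈ (lv (pa v)).toList := Finset.mem_toList.mpr (hlv_mem v hv)
    have h2 : (lv (pa v)).toList.idxOf v < (lv (pa v)).toList.length :=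
      List.idxOf_lt_length_iff.mpr h1
    rw [Finset.length_toList] at h2
    simp only [hkkdef]
    exact lt_of_lt_of_le h2 (hcard_le (pa v) (hpa_mem v hv))
  have hkk_inj : ∀ v, v ∉ S → ∀ w, w ∉ S → pa v = pa w → kk v = kk w → v = w := by
    intro v hv w hw hpaeq hkeq
    have h1 : v ∈ (lv (pa v)).toList := Finset.mem_toList.mpr (hlv_mem v hv)
    have h2 : w ∈ (lv (pa v)).toList := by
      rw [hpaeq]; exact Finset.mem_toList.mpr (hlv_mem w hw)
    have e1 := List.idxOf_get (List.idxOf_lt_length_iff.mpr h1)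
    have e2 := List.idxOf_get (List.idxOf_lt_length_iff.mpr h2)
    simp only [hkkdef] at hkeq
    rw [← hpaeq] at hkeq
    rw [← e1, ← e2]
    congr 1
    exact Fin.ext hkeq
  set c : V → EuclideanSpace ℝ (Fin 2) := fun v =>
    if v ∈ S then UDCAux.pt (2 * (idx v)) 0
    else (UDCAux.slots p.length (idx (pa v))).getD (kk v) (UDCAux.pt 0 0) with hcdef
  have hSS : ∀ u v, u ∈ S → v ∈ S → u ≠ v →
      2 ≤ dist (c u) (c v) ∧ (dist (c u) (c v) = 2 ↔ G.Adj u v) := by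
    intro u v hu hv huv
    have hcu : c u = UDCAux.pt (2 * (idx u)) 0 := by simp only [hcdef, if_pos hu]
    have hcv : c v = UDCAux.pt (2 * (idx v)) 0 := by simp only [hcdef, if_pos hv]
    have hne : idx u ≠ idx v := fun h => huv (hidx_inj u hu v hv h)
    obtain ⟨h4, hiff⟩ := UDCAux.RSS hne
    rw [hcu, hcv]
    constructor
    · exact UDCAux.two_le_dist_pt (by nlinarith)
    · rw [UDCAux.dist_pt_two_iff, hadjS u hu v hv]
      constructor
      · intro hE; exact hiff.mp (by nlinarith)
      · intro hadj; have := hiff.mpr hadj; nlinarith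
  have hSL : ∀ u v, u ∈ S → v ∉ S →
      2 ≤ dist (c u) (c v) ∧ (dist (c u) (c v) = 2 ↔ G.Adj u v) := by
    intro u v hu hv
    have hpaS := hpa_mem v hv
    have hi := hidx_le (pa v) hpaS
    have hj := hidx_le u hu
    have hcu : c u = UDCAux.pt (2 * (idx u)) 0 := by simp only [hcdef, if_pos hu]
    have hcv : c v = (UDCAux.slots p.length (idx (pa v))).getD (kk v) (UDCAux.pt 0 0) := by
      simp only [hcdef, if_neg hv]
    have hAdjIff : G.Adj u v ↔ idx u = idx (pa v) := by
      constructor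
      · intro h; rw [hpa_uniq v hv u h.symm]
      · intro h
        have : u = pa v := hidx_inj u hu (pa v) hpaS h
        rw [this]; exact (hpa_adj v hv).symm
    rcases UDCAux.slot_cases p.length (idx (pa v)) (kk v) (hkk_lt v hv) with
      ⟨hk, hpos⟩ | ⟨hk, hpos⟩ | ⟨hi0, hk, hpos⟩ | ⟨him, hk, hpos⟩
    · rw [hcu, hcv, hpos]
      unfold UDCAux.upP
      refine UDCAux.assemble ?_ ?_
      · intro hAdj
        rw [hAdjIff.mp hAdj]
        exact UDCAux.dist_pt_eq_two (by linear_combination UDCAux.RSU_eq p.length (idx (pa v)))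
      · intro hAdj
        have hne : idx u ≠ idx (pa v) := fun h => hAdj (hAdjIff.mpr h)
        exact UDCAux.two_lt_dist_pt (by nlinarith [UDCAux.RSU_ne (j := idx u) hi hne])
    · rw [hcu, hcv, hpos]
      unfold UDCAux.downP
      refine UDCAux.assemble ?_ ?_
      · intro hAdj
        rw [hAdjIff.mp hAdj]
        exact UDCAux.dist_pt_eq_two (by linear_combination UDCAux.RSU_eq p.length (idx (pa v)))
      · intro hAdj
        have hne : idx u ≠ idx (pa v) := fun h => hAdj (hAdjIff.mpr h)
        exact UDCAux.two_lt_dist_pt (by nlinarith [UDCAux.RSU_ne (j := idx u) hi hne])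
    · rw [hcu, hcv, hpos]
      unfold UDCAux.wP
      refine UDCAux.assemble ?_ ?_
      · intro hAdj
        have he : idx u = 0 := by rw [hAdjIff.mp hAdj, hi0]
        rw [he]
        exact UDCAux.dist_pt_eq_two (by norm_num)
      · intro hAdj
        have hne : idx u ≠ 0 := fun h => hAdj (hAdjIff.mpr (by rw [h, hi0]))
        exact UDCAux.two_lt_dist_pt (by nlinarith [UDCAux.RSW_ne hne])
    · rw [hcu, hcv, hpos]
      unfold UDCAux.eP
      refine UDCAux.assemble ?_ ?_
      · intro hAdj
        have he : idx u = p.length := by rw [hAdjIff.mp hAdj, him]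
        rw [he]
        exact UDCAux.dist_pt_eq_two (by push_cast; ring)
      · intro hAdj
        have hne : idx u ≠ p.length := fun h => hAdj (hAdjIff.mpr (by rw [h, him]))
        exact UDCAux.two_lt_dist_pt (by nlinarith [UDCAux.RSE_ne hj hne])
  have hLL : ∀ u v, u ∉ S → v ∉ S → u ≠ v →
      2 ≤ dist (c u) (c v) ∧ (dist (c u) (c v) = 2 ↔ G.Adj u v) := by
    intro u v hu hv huv
    have hnadj : ¬ G.Adj u v := by
      intro h
      apply hu
      rw [hpa_uniq v hv u h.symm]
      exact hpa_mem v hv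
    have hpaU := hpa_mem u hu
    have hpaV := hpa_mem v hv
    have hiu := hidx_le (pa u) hpaU
    have hiv := hidx_le (pa v) hpaV
    have hne_or : idx (pa u) ≠ idx (pa v) ∨ (pa u = pa v ∧ kk u ≠ kk v) := by
      by_cases hpp : pa u = pa v
      · exact Or.inr ⟨hpp, fun hk => huv (hkk_inj u hu v hv hpp hk)⟩
      · exact Or.inl (fun h => hpp (hidx_inj _ hpaU _ hpaV h))
    have hcu : c u = (UDCAux.slots p.length (idx (pa u))).getD (kk u) (UDCAux.pt 0 0) := by
      simp only [hcdef, if_neg hu]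
    have hcv : c v = (UDCAux.slots p.length (idx (pa v))).getD (kk v) (UDCAux.pt 0 0) := by
      simp only [hcdef, if_neg hv]
    refine UDCAux.assemble (fun h => absurd h hnadj) (fun _ => ?_)
    rw [hcu, hcv]
    rcases UDCAux.slot_cases p.length (idx (pa u)) (kk u) (hkk_lt u hu) with
      ⟨hku, hposu⟩ | ⟨hku, hposu⟩ | ⟨hiu0, hku, hposu⟩ | ⟨hium, hku, hposu⟩ <;>
    rcases UDCAux.slot_cases p.length (idx (pa v)) (kk v) (hkk_lt v hv) with
      ⟨hkv, hposv⟩ | ⟨hkv, hposv⟩ | ⟨hiv0, hkv, hposv⟩ | ⟨hivm, hkv, hposv⟩ <;>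
    rw [hposu, hposv] <;>
    simp only [UDCAux.upP, UDCAux.downP, UDCAux.wP, UDCAux.eP]
    -- 16 cases
    · -- up up
      have hne : idx (pa u) ≠ idx (pa v) := by
        rcases hne_or with h | ⟨_, hkk'⟩
        · exact h
        · exact absurd (hku.trans hkv.symm) hkk'
      exact UDCAux.two_lt_dist_pt (by nlinarith [UDCAux.RUU hiu hiv hne])
    · -- up down
      exact UDCAux.two_lt_dist_pt (by nlinarith [UDCAux.RUD hiu hiv])
    · -- up w
      exact UDCAux.two_lt_dist_pt (by nlinarith [UDCAux.RUW hiu])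
    · -- up e
      exact UDCAux.two_lt_dist_pt (by nlinarith [UDCAux.RUE hiu])
    · -- down up
      exact UDCAux.two_lt_dist_pt (by nlinarith [UDCAux.RUD hiv hiu])
    · -- down down
      have hne : idx (pa u) ≠ idx (pa v) := by
        rcases hne_or with h | ⟨_, hkk'⟩
        · exact h
        · exact absurd (hku.trans hkv.symm) hkk'
      exact UDCAux.two_lt_dist_pt (by nlinarith [UDCAux.RUU hiu hiv hne])
    · -- down w
      exact UDCAux.two_lt_dist_pt (by nlinarith [UDCAux.RUW hiu])
    · -- down e
      exact UDCAux.two_lt_dist_pt (by nlinarith [UDCAux.RUE hiu])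
    · -- w up
      exact UDCAux.two_lt_dist_pt (by nlinarith [UDCAux.RUW hiv])
    · -- w down
      exact UDCAux.two_lt_dist_pt (by nlinarith [UDCAux.RUW hiv])
    · -- w w : impossible
      exfalso
      rcases hne_or with h | ⟨_, hkk'⟩
      · exact h (by rw [hiu0, hiv0])
      · exact hkk' (hku.trans hkv.symm)
    · -- w e
      exact UDCAux.two_lt_dist_pt (by nlinarith [UDCAux.RWE p.length])
    · -- e up
      exact UDCAux.two_lt_dist_pt (by nlinarith [UDCAux.RUE hiv])
    · -- e down
      exact UDCAux.two_lt_dist_pt (by nlinarith [UDCAux.RUE hiv])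
    · -- e w
      exact UDCAux.two_lt_dist_pt (by nlinarith [UDCAux.RWE p.length])
    · -- e e : impossible
      exfalso
      have hii : idx (pa u) = idx (pa v) := hium.trans hivm.symm
      rcases hne_or with h | ⟨_, hkk'⟩
      · exact h hii
      · rcases hku with ⟨h1, h2⟩ | ⟨h1, h2⟩ <;> rcases hkv with ⟨h3, h4⟩ | ⟨h3, h4⟩
        · exact hkk' (h2.trans h4.symm)
        · exact h3 (hii ▸ h1)
        · exact h1 (hii.symm ▸ h3)
        · exact hkk' (h2.trans h4.symm)
  have key : ∀ u v : V, u ≠ v →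
      2 ≤ dist (c u) (c v) ∧ (dist (c u) (c v) = 2 ↔ G.Adj u v) := by
    intro u v huv
    by_cases hu : u ∈ S <;> by_cases hv : v ∈ S
    · exact hSS u v hu hv huv
    · exact hSL u v hu hv
    · have h := hSL v u hv hu
      rw [dist_comm (c v) (c u), G.adj_comm v u] at h
      exact h
    · exact hLL u v hu hv huv
  refine ⟨c, ?_, key⟩
  intro u v h
  by_contra hne
  have h2 := (key u v hne).1
  rw [h] at h2
  simp at h2
  linarith
end

section
/- Let n, m be natural numbers with m ≥ n, let B be a positive integer, and let A be a multiset of 3n positive integers. Define the multiset A' consisting of the integers 180·a for each a ∈ A (with multiplicity), together with 2(m−n) copies of 60B−5 and (m−n) copies of 60B+10, and set B' = 180B. Then A can be partitioned into n triples each of sum B if and only if A' can be partitioned into m triples each of sum B'. -/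
/-- A multiset of naturals can be partitioned into `k` triples each of sum `S`. -/
def PartitionsIntoTriples (A : Multiset ℕ) (k S : ℕ) : Prop :=
  ∃ P : Multiset (Multiset ℕ), Multiset.card P = k ∧ P.sum = A ∧
    ∀ t ∈ P, Multiset.card t = 3 ∧ t.sum = S

private lemma sum_map_mul180 (s : Multiset ℕ) :
    (Multiset.map (fun a => 180*a) s).sum = 180 * s.sum := by
  induction s using Multiset.induction_on with
  | empty => simp
  | cons a s ih => simp [ih]; ring

private lemma map_msum (f : ℕ → ℕ) (P : Multiset (Multiset ℕ)) :
    (P.map (Multiset.map f)).sum = Multiset.map f P.sum := by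
  induction P using Multiset.induction_on with
  | empty => simp
  | cons a s ih => simp [ih]

private lemma mem_msum {s : Multiset (Multiset ℕ)} {a : ℕ} : a ∈ s.sum ↔ ∃ t ∈ s, a ∈ t := by
  induction s using Multiset.induction_on with
  | empty => simp
  | cons b s ih => simp [ih, or_and_right, exists_or]

private lemma sum_map_div180 (s : Multiset ℕ) (h : ∀ x ∈ s, 180 ∣ x) :
    180 * (Multiset.map (fun x => x / 180) s).sum = s.sum := by
  induction s using Multiset.induction_on with
  | empty => simp
  | cons a s ih =>
    have ha : 180 ∣ a := h a (Multiset.mem_cons_self a s)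
    have ih' := ih (fun x hx => h x (Multiset.mem_cons_of_mem hx))
    simp only [Multiset.map_cons, Multiset.sum_cons]
    rw [Nat.mul_add, ih', Nat.mul_div_cancel' ha]

private lemma smul_triple (k p q : ℕ) :
    k • ({p, p, q} : Multiset ℕ) =
      Multiset.replicate (2 * k) p + Multiset.replicate k q := by
  induction k with
  | zero => simp
  | succ j ih =>
    rw [succ_nsmul, ih]
    have : 2 * (j + 1) = 2 * j + 1 + 1 := by ring
    rw [this, Multiset.replicate_succ, Multiset.replicate_succ, Multiset.replicate_succ]
    ext a
    simp [Multiset.count_cons, Multiset.count_replicate, Multiset.count_singleton]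
    split_ifs <;> omega

/-- Padding a 3-Partition instance: `A` (of `3n` positive integers, bound `B`) can be
partitioned into `n` triples of sum `B` iff the padded instance `A'`, consisting of the
elements `180·a` for `a ∈ A` together with `2(m−n)` copies of `60B−5` and `m−n` copies
of `60B+10`, can be partitioned into `m` triples of sum `B' = 180B`. -/
theorem threePartition_padding (n m B : ℕ) (hmn : n ≤ m) (hB : 0 < B)
    (A : Multiset ℕ) (hcard : Multiset.card A = 3 * n) (hpos : ∀ a ∈ A, 0 < a) :
    PartitionsIntoTriples A n B ↔
      PartitionsIntoTriples
        (A.map (fun a => 180 * a)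
          + Multiset.replicate (2 * (m - n)) (60 * B - 5)
          + Multiset.replicate (m - n) (60 * B + 10))
        m (180 * B) := by
  set p := 60 * B - 5 with hp
  set q := 60 * B + 10 with hq
  set T : Multiset ℕ := {p, p, q} with hT
  have hTsum : T.sum = 180 * B := by simp [hT, hp, hq]; omega
  have hpads : Multiset.replicate (2 * (m - n)) p + Multiset.replicate (m - n) q
      = (m - n) • T := by rw [smul_triple]
  constructor
  · rintro ⟨P, hPcard, hPsum, hPt⟩
    refine ⟨P.map (Multiset.map (fun a => 180 * a)) + Multiset.replicate (m - n) T, ?_, ?_, ?_⟩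
    · simp [hPcard]; omega
    · rw [Multiset.sum_add, map_msum, hPsum, Multiset.sum_replicate, add_assoc, hpads]
    · intro t ht
      rcases Multiset.mem_add.1 ht with ht | ht
      · obtain ⟨u, hu, rfl⟩ := Multiset.mem_map.1 ht
        obtain ⟨hu3, huS⟩ := hPt u hu
        constructor
        · simp [hu3]
        · rw [sum_map_mul180, huS]
      · rw [Multiset.eq_of_mem_replicate ht]
        exact ⟨by simp [hT], hTsum⟩
  · rintro ⟨P, hPcard, hPsum, hPt⟩
    -- classify each triple
    have hclass : ∀ t ∈ P, (∀ x ∈ t, 180 ∣ x) ∨ t = T := by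
      intro t ht
      obtain ⟨h3, hS⟩ := hPt t ht
      obtain ⟨x, y, z, rfl⟩ := Multiset.card_eq_three.1 h3
      have hmem : ∀ w ∈ ({x, y, z} : Multiset ℕ), (∃ a, w = 180 * a) ∨ w = p ∨ w = q := by
        intro w hw
        have hw' : w ∈ P.sum := mem_msum.2 ⟨_, ht, hw⟩
        rw [hPsum] at hw'
        rcases Multiset.mem_add.1 hw' with hw'' | hw''
        · rcases Multiset.mem_add.1 hw'' with hw3 | hw3
          · obtain ⟨a, _, rfl⟩ := Multiset.mem_map.1 hw3
            exact Or.inl ⟨a, rfl⟩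
          · exact Or.inr (Or.inl (Multiset.eq_of_mem_replicate hw3))
        · exact Or.inr (Or.inr (Multiset.eq_of_mem_replicate hw''))
      have hsum : x + (y + z) = 180 * B := by simpa using hS
      have hx := hmem x (by simp)
      have hy := hmem y (by simp)
      have hz := hmem z (by simp)
      have swap1 : ∀ a b : ℕ, ({a, b, b} : Multiset ℕ) = {b, a, b} := fun a b =>
        Multiset.cons_swap a b _
      have swap2 : ∀ a b : ℕ, ({b, a, b} : Multiset ℕ) = {b, b, a} := by
        intro a b
        show b ::ₘ a ::ₘ b ::ₘ 0 = b ::ₘ b ::ₘ a ::ₘ 0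
        rw [Multiset.cons_swap a b]
      rcases hx with ⟨a, rfl⟩ | rfl | rfl <;>
        rcases hy with ⟨b, rfl⟩ | rfl | rfl <;>
          rcases hz with ⟨c, rfl⟩ | rfl | rfl
      all_goals first
        | (left; intro w hw; simp at hw; rcases hw with rfl | rfl | rfl <;> omega)
        | omega
        | (right; rfl)
        | (right; rw [swap2])
        | (right; rw [swap1, swap2])
    classical
    set P1 := P.filter (fun t => ∀ x ∈ t, 180 ∣ x) with hP1
    set P2 := P.filter (fun t => ¬ ∀ x ∈ t, 180 ∣ x) with hP2
    have hsplit : P1 + P2 = P := Multiset.filter_add_not _ P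
    have hP2T : ∀ t ∈ P2, t = T := by
      intro t ht
      rw [hP2, Multiset.mem_filter] at ht
      rcases hclass t ht.1 with h | h
      · exact absurd h ht.2
      · exact h
    have hP2rep : P2 = Multiset.replicate (Multiset.card P2) T :=
      Multiset.eq_replicate_card.2 hP2T
    -- count q to determine card P2
    have hqnotdvd : ¬ 180 ∣ q := by
      intro ⟨c, hc⟩; omega
    have hqP1 : q ∉ P1.sum := by
      intro hmem
      obtain ⟨t, ht, hqt⟩ := mem_msum.1 hmem
      rw [hP1, Multiset.mem_filter] at ht
      exact hqnotdvd (ht.2 q hqt)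
    have hqA : Multiset.count q (A.map (fun a => 180 * a)) = 0 := by
      rw [Multiset.count_eq_zero]
      intro hmem
      obtain ⟨a, _, ha⟩ := Multiset.mem_map.1 hmem
      exact hqnotdvd ⟨a, ha.symm⟩
    have hpq : p ≠ q := by rw [hp, hq]; omega
    have hcount : Multiset.count q P.sum = m - n := by
      rw [hPsum]
      rw [Multiset.count_add, Multiset.count_add, hqA, Multiset.count_replicate,
        Multiset.count_replicate]
      simp [hpq]
    have hcount2 : Multiset.count q P.sum = Multiset.card P2 := by
      rw [← hsplit, Multiset.sum_add, Multiset.count_add,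
        Multiset.count_eq_zero.2 hqP1, hP2rep, Multiset.sum_replicate,
        smul_triple, Multiset.count_add, Multiset.count_replicate,
        Multiset.count_replicate]
      simp [hpq]
    have hcardP2 : Multiset.card P2 = m - n := by omega
    have hcardP1 : Multiset.card P1 = n := by
      have := congrArg Multiset.card hsplit
      rw [Multiset.card_add] at this
      omega
    have hP1sum : P1.sum = A.map (fun a => 180 * a) := by
      have h2 : P2.sum = (m - n) • T := by
        rw [hP2rep, Multiset.sum_replicate, hcardP2]
      have h3 : P1.sum + P2.sum = P.sum := by rw [← Multiset.sum_add, hsplit]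
      have h1 : P1.sum + (m - n) • T = A.map (fun a => 180 * a) + (m - n) • T := by
        rw [← h2, h3, hPsum, add_assoc, hpads, h2]
      exact add_right_cancel h1
    -- build the partition of A
    refine ⟨P1.map (Multiset.map (fun x => x / 180)), ?_, ?_, ?_⟩
    · simp [hcardP1]
    · rw [map_msum, hP1sum, Multiset.map_map]
      refine Eq.trans (Multiset.map_congr rfl ?_) (Multiset.map_id A)
      intro a _
      simp [Nat.mul_div_cancel_left a (by norm_num : (0:ℕ) < 180)]
    · intro t ht
      obtain ⟨u, hu, rfl⟩ := Multiset.mem_map.1 ht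
      have hu' : u ∈ P := Multiset.mem_of_le (Multiset.filter_le _ P) hu
      obtain ⟨hu3, huS⟩ := hPt u hu'
      have hdvd : ∀ x ∈ u, 180 ∣ x := by
        rw [hP1, Multiset.mem_filter] at hu
        exact hu.2
      refine ⟨by simp [hu3], ?_⟩
      have := sum_map_div180 u hdvd
      rw [huS] at this
      omega
end

section
/- Let B be a real number with B > 12 and let c be a real number with 0 < c ≤ 17. Define r_min = 2 − (1 − 12/B)/B and r_max = 2 + (2 − 12/B)/B. Then 12 + c/B² ≤ 2·r_min + 2·√((r_max + r_min)² − (r_max − r_min)²). -/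
set_option maxHeartbeats 1000000 in
/-- Condition (1): for `B > 12` and `0 < c ≤ 17`, with `r_min = 2 − (1 − 12/B)/B` and
`r_max = 2 + (2 − 12/B)/B`, one has
`12 + c/B² ≤ 2r_min + 2√((r_max + r_min)² − (r_max − r_min)²)`. -/
theorem infeasible_triple_space_lower_bound (B c : ℝ) (hB : 12 < B)
    (hc0 : 0 < c) (hc : c ≤ 17) :
    12 + c / B ^ 2 ≤
      2 * (2 - (1 - 12 / B) / B) +
        2 * Real.sqrt (((2 + (2 - 12 / B) / B) + (2 - (1 - 12 / B) / B)) ^ 2 -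
          ((2 + (2 - 12 / B) / B) - (2 - (1 - 12 / B) / B)) ^ 2) := by
  have hB0 : (0:ℝ) < B := by linarith
  have hBne : B ≠ 0 := ne_of_gt hB0
  set u : ℝ := 1 / B with hudef
  have hu0 : 0 < u := by positivity
  have hu12 : 12 * u < 1 := by
    rw [hudef, mul_one_div, div_lt_one hB0]; linarith
  have harg : ((2 + (2 - 12 / B) / B) + (2 - (1 - 12 / B) / B)) ^ 2 -
      ((2 + (2 - 12 / B) / B) - (2 - (1 - 12 / B) / B)) ^ 2
      = 16 + 8*u - 8*u^2 + 144*u^3 - 576*u^4 := by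
    rw [hudef]; field_simp; ring
  have hc2 : c / B ^ 2 = c * u ^ 2 := by rw [hudef]; field_simp
  have hrmin : 2 - (1 - 12 / B) / B = 2 - u + 12 * u ^ 2 := by
    rw [hudef]; field_simp; ring
  rw [harg, hc2, hrmin]
  have hXnn : (0:ℝ) ≤ 16 + 8*u - 8*u^2 + 144*u^3 - 576*u^4 := by
    nlinarith [sq_nonneg u, mul_pos hu0 hu0, sq_nonneg (u*u), mul_pos (mul_pos hu0 hu0) hu0]
  set s : ℝ := Real.sqrt (16 + 8*u - 8*u^2 + 144*u^3 - 576*u^4) with hsdef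
  have hs0 : 0 ≤ s := Real.sqrt_nonneg _
  have hs2 : s ^ 2 = 16 + 8*u - 8*u^2 + 144*u^3 - 576*u^4 := Real.sq_sqrt hXnn
  have ht0 : 0 < 4 + u + (c - 24) * u ^ 2 / 2 := by nlinarith
  have hu3 : (0:ℝ) ≤ u ^ 3 := by positivity
  have hu4 : (0:ℝ) ≤ u ^ 4 := by positivity
  have h1 : 0 ≤ u ^ 2 * (87 - 4 * c) := by nlinarith [sq_nonneg u]
  have h2 : 0 ≤ u ^ 3 * (108 - c) := by nlinarith
  have h3 : 0 ≤ u ^ 3 * (1 - 12 * u) := by nlinarith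
  have h4 : 0 ≤ u ^ 4 * (c * (48 - c)) := by
    apply mul_nonneg hu4; nlinarith
  have hts : 4 + u + (c - 24) * u ^ 2 / 2 ≤ s := by
    rw [hsdef, Real.le_sqrt ht0.le]
    have hid : (16 + 8*u - 8*u^2 + 144*u^3 - 576*u^4) -
        (4 + u + (c - 24) * u ^ 2 / 2) ^ 2 =
        u ^ 2 * (87 - 4 * c) + u ^ 3 * (108 - c) + 60 * (u ^ 3 * (1 - 12 * u)) +
          (u ^ 4 * (c * (48 - c))) / 4 := by ring
    · linarith [h1, h2, h3, h4]
    · exact hXnn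
  linarith [hts]
end

section
/- Let B be an integer with B > 12 and B divisible by 4, let x be an integer with B/4 + 1 ≤ x ≤ B/2 − 1, and let c be a real number with 0 ≤ c ≤ 1. Define r(x) = 2 − 4/B + 12x/B² and r_min = 2 − 1/B + 12/B². Then √((r(x) − 8/B²)² + (r(x) − r_min)²) ≤ r(x) − c/B². -/
/-- Condition (2): for an integer `B > 12` divisible by `4`, an integer `x` with
`B/4 + 1 ≤ x ≤ B/2 − 1`, and a real `0 ≤ c ≤ 1`, with `r(x) = 2 − 4/B + 12x/B²` and
`r_min = 2 − 1/B + 12/B²`, one has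
`√((r(x) − 8/B²)² + (r(x) − r_min)²) ≤ r(x) − c/B²`. -/
theorem separator_overlap_intersects (B x : ℤ) (hB : 12 < B) (hdvd : 4 ∣ B)
    (hx1 : B / 4 + 1 ≤ x) (hx2 : x ≤ B / 2 - 1) (c : ℝ) (hc0 : 0 ≤ c) (hc1 : c ≤ 1) :
    Real.sqrt (((2 - 4 / (B : ℝ) + 12 * (x : ℝ) / (B : ℝ) ^ 2) - 8 / (B : ℝ) ^ 2) ^ 2 +
        ((2 - 4 / (B : ℝ) + 12 * (x : ℝ) / (B : ℝ) ^ 2) -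
          (2 - 1 / (B : ℝ) + 12 / (B : ℝ) ^ 2)) ^ 2) ≤
      (2 - 4 / (B : ℝ) + 12 * (x : ℝ) / (B : ℝ) ^ 2) - c / (B : ℝ) ^ 2 := by
  have hB' : (13 : ℝ) ≤ (B : ℝ) := by exact_mod_cast hB
  have hb0 : (0 : ℝ) < (B : ℝ) := by linarith
  have hbne : (B : ℝ) ≠ 0 := ne_of_gt hb0
  have hx1' : (B : ℝ) + 4 ≤ 4 * (x : ℝ) := by exact_mod_cast (by omega : (B:ℤ) + 4 ≤ 4 * x)
  have hx2' : 2 * (x : ℝ) ≤ (B : ℝ) - 2 := by exact_mod_cast (by omega : 2 * x ≤ (B:ℤ) - 2)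
  set β : ℝ := (B : ℝ) with hβ
  set X : ℝ := (x : ℝ) with hX
  have hrhs : 0 ≤ (2 - 4 / β + 12 * X / β ^ 2) - c / β ^ 2 := by
    have heq : (2 - 4 / β + 12 * X / β ^ 2) - c / β ^ 2
        = (2 * β ^ 2 - 4 * β + 12 * X - c) / β ^ 2 := by field_simp
    rw [heq]
    apply div_nonneg _ (by positivity)
    nlinarith [sq_nonneg (β - 13)]
  rw [show (2 - 4 / β + 12 * X / β ^ 2) - c / β ^ 2
      = Real.sqrt (((2 - 4 / β + 12 * X / β ^ 2) - c / β ^ 2) ^ 2) from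
      (Real.sqrt_sq hrhs).symm]
  apply Real.sqrt_le_sqrt
  have heq2 : ((2 - 4 / β + 12 * X / β ^ 2) - c / β ^ 2) ^ 2
      - (((2 - 4 / β + 12 * X / β ^ 2) - 8 / β ^ 2) ^ 2
        + ((2 - 4 / β + 12 * X / β ^ 2) - (2 - 1 / β + 12 / β ^ 2)) ^ 2)
      = (((2 * β ^ 2 - 4 * β + 12 * X) - c) ^ 2
        - ((2 * β ^ 2 - 4 * β + 12 * X) - 8) ^ 2
        - (12 * X - 3 * β - 12) ^ 2) / β ^ 4 := by
    field_simp
    ring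
  have hnum : 0 ≤ ((2 * β ^ 2 - 4 * β + 12 * X) - c) ^ 2
        - ((2 * β ^ 2 - 4 * β + 12 * X) - 8) ^ 2
        - (12 * X - 3 * β - 12) ^ 2 := by
    nlinarith [sq_nonneg (β - 13), sq_nonneg (12 * X - 3 * β - 12),
      mul_nonneg (by linarith : (0:ℝ) ≤ 12 * X - 3 * β - 12) (by linarith : (0:ℝ) ≤ 3 * β - 24 - (12 * X - 3 * β - 12)),
      mul_le_mul hB' hB' (by linarith) (by linarith)]
  have : 0 ≤ (((2 * β ^ 2 - 4 * β + 12 * X) - c) ^ 2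
        - ((2 * β ^ 2 - 4 * β + 12 * X) - 8) ^ 2
        - (12 * X - 3 * β - 12) ^ 2) / β ^ 4 := by positivity
  linarith [heq2 ▸ this]
end

section
/- Let B be an integer with B > 12 and B divisible by 4, define r(x) = 2 − 4/B + 12x/B², r_min = r(B/4 + 1) = 2 − 1/B + 12/B² and r_max = r(B/2 − 1) = 2 + 2/B − 12/B². Let a, b, c be integers with B/4 + 1 ≤ a, b, c ≤ B/2 − 1 and a + b + c ≥ B + 1. Then r(a) + r(c) + 2√(r(a)·r(b)) + 2√(r(b)·r(c)) ≥ 2·r_min + 4·√(r_max·r_min). (Every infeasible disk triple, in any order with b in the middle, consumes at least as much horizontal space as the narrowest infeasible triple (r_min, r_max, r_min).) -/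
/-- Abstract core: if three radii lie in `[rmin, rmax]` and their sum is at least
`2 rmin + rmax`, the packed width is at least that of `(rmin, rmax, rmin)`. -/
lemma width_core (rmin rmax ra rb rc : ℝ) (hrmin0 : 0 < rmin)
    (ha1 : rmin ≤ ra) (ha2 : ra ≤ rmax)
    (hb1 : rmin ≤ rb) (hb2 : rb ≤ rmax)
    (hc1 : rmin ≤ rc) (hc2 : rc ≤ rmax)
    (hsum : 2 * rmin + rmax ≤ ra + rb + rc) :
    2 * rmin + 4 * Real.sqrt (rmax * rmin) ≤
      ra + rc + 2 * Real.sqrt (ra * rb) + 2 * Real.sqrt (rb * rc) := by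
  have hra0 : 0 < ra := lt_of_lt_of_le hrmin0 ha1
  have hrb0 : 0 < rb := lt_of_lt_of_le hrmin0 hb1
  have hrc0 : 0 < rc := lt_of_lt_of_le hrmin0 hc1
  have hrmax0 : 0 < rmax := lt_of_lt_of_le hrmin0 (le_trans ha1 ha2)
  set s : ℝ := Real.sqrt rmin with hs
  set t : ℝ := Real.sqrt rmax with ht
  set sa : ℝ := Real.sqrt ra with hsa
  set sb : ℝ := Real.sqrt rb with hsb
  set sc : ℝ := Real.sqrt rc with hsc
  have hs2 : s ^ 2 = rmin := Real.sq_sqrt hrmin0.le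
  have ht2 : t ^ 2 = rmax := Real.sq_sqrt hrmax0.le
  have hsa2 : sa ^ 2 = ra := Real.sq_sqrt hra0.le
  have hsb2 : sb ^ 2 = rb := Real.sq_sqrt hrb0.le
  have hsc2 : sc ^ 2 = rc := Real.sq_sqrt hrc0.le
  have hsab : Real.sqrt (ra * rb) = sa * sb := Real.sqrt_mul hra0.le _
  have hsbc : Real.sqrt (rb * rc) = sb * sc := Real.sqrt_mul hrb0.le _
  have hsmm : Real.sqrt (rmax * rmin) = t * s := Real.sqrt_mul hrmax0.le _
  have hsa1 : s ≤ sa := Real.sqrt_le_sqrt ha1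
  have hsa2' : sa ≤ t := Real.sqrt_le_sqrt ha2
  have hsb1 : s ≤ sb := Real.sqrt_le_sqrt hb1
  have hsb2' : sb ≤ t := Real.sqrt_le_sqrt hb2
  have hsc1 : s ≤ sc := Real.sqrt_le_sqrt hc1
  have hsc2' : sc ≤ t := Real.sqrt_le_sqrt hc2
  rw [hsab, hsbc, hsmm]
  have f1 : 0 ≤ (t - sa) + (sb - s) := by linarith
  have f2 : 0 ≤ (t - sb) + (sa - s) := by linarith
  have f3 : 0 ≤ (t - sb) + (sc - s) := by linarith
  have f4 : 0 ≤ (t - sc) + (sb - s) := by linarith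
  have had : ra + rb - (t - s) ^ 2 ≤ 2 * (sa * sb) := by
    nlinarith [mul_nonneg f1 f2, hsa2, hsb2]
  have hcd : rb + rc - (t - s) ^ 2 ≤ 2 * (sb * sc) := by
    nlinarith [mul_nonneg f3 f4, hsb2, hsc2]
  have hfin : 2 * rmin + 4 * (t * s) = 2 * (2 * rmin + rmax) - 2 * (t - s) ^ 2 := by
    rw [← hs2, ← ht2]; ring
  linarith [had, hcd, hsum]

/-- Real-variable version of the main theorem. -/
lemma width_real (Br x y z : ℝ) (hB13 : 13 ≤ Br)
    (hx1 : Br / 4 + 1 ≤ x) (hx2 : x ≤ Br / 2 - 1)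
    (hy1 : Br / 4 + 1 ≤ y) (hy2 : y ≤ Br / 2 - 1)
    (hz1 : Br / 4 + 1 ≤ z) (hz2 : z ≤ Br / 2 - 1)
    (hs : Br + 1 ≤ x + y + z) :
    (2 - 4 / Br + 12 * x / Br ^ 2) +
      (2 - 4 / Br + 12 * z / Br ^ 2) +
      2 * Real.sqrt ((2 - 4 / Br + 12 * x / Br ^ 2) *
        (2 - 4 / Br + 12 * y / Br ^ 2)) +
      2 * Real.sqrt ((2 - 4 / Br + 12 * y / Br ^ 2) *
        (2 - 4 / Br + 12 * z / Br ^ 2)) ≥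
    2 * (2 - 1 / Br + 12 / Br ^ 2) +
      4 * Real.sqrt ((2 + 2 / Br - 12 / Br ^ 2) *
        (2 - 1 / Br + 12 / Br ^ 2)) := by
  have hB0 : (0 : ℝ) < Br := by linarith
  have hBne : Br ≠ 0 := ne_of_gt hB0
  have hrmin0 : 0 < 2 - 1 / Br + 12 / Br ^ 2 := by
    have h1 : 1 / Br < 1 := by rw [div_lt_one hB0]; linarith
    have h2 : 0 < 12 / Br ^ 2 := by positivity
    linarith
  have key : ∀ w : ℝ, Br / 4 + 1 ≤ w → w ≤ Br / 2 - 1 →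
      2 - 1 / Br + 12 / Br ^ 2 ≤ 2 - 4 / Br + 12 * w / Br ^ 2 ∧
      2 - 4 / Br + 12 * w / Br ^ 2 ≤ 2 + 2 / Br - 12 / Br ^ 2 := by
    intro w hw1 hw2
    constructor
    · have heq : (2 - 4 / Br + 12 * w / Br ^ 2) - (2 - 1 / Br + 12 / Br ^ 2)
          = 12 * (w - Br / 4 - 1) / Br ^ 2 := by field_simp; ring
      nlinarith [div_nonneg (by linarith : (0:ℝ) ≤ 12 * (w - Br / 4 - 1))
        (by positivity : (0:ℝ) ≤ Br ^ 2)]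
    · have heq : (2 + 2 / Br - 12 / Br ^ 2) - (2 - 4 / Br + 12 * w / Br ^ 2)
          = 12 * (Br / 2 - 1 - w) / Br ^ 2 := by field_simp; ring
      nlinarith [div_nonneg (by linarith : (0:ℝ) ≤ 12 * (Br / 2 - 1 - w))
        (by positivity : (0:ℝ) ≤ Br ^ 2)]
  obtain ⟨hx1', hx2'⟩ := key _ hx1 hx2
  obtain ⟨hy1', hy2'⟩ := key _ hy1 hy2
  obtain ⟨hz1', hz2'⟩ := key _ hz1 hz2
  have hsum' : 2 * (2 - 1 / Br + 12 / Br ^ 2) + (2 + 2 / Br - 12 / Br ^ 2) ≤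
      (2 - 4 / Br + 12 * x / Br ^ 2) + (2 - 4 / Br + 12 * y / Br ^ 2) +
      (2 - 4 / Br + 12 * z / Br ^ 2) := by
    have heq : ((2 - 4 / Br + 12 * x / Br ^ 2) + (2 - 4 / Br + 12 * y / Br ^ 2) +
        (2 - 4 / Br + 12 * z / Br ^ 2)) -
        (2 * (2 - 1 / Br + 12 / Br ^ 2) + (2 + 2 / Br - 12 / Br ^ 2))
        = 12 * (x + y + z - Br - 1) / Br ^ 2 := by field_simp; ring
    nlinarith [div_nonneg (by linarith : (0:ℝ) ≤ 12 * (x + y + z - Br - 1))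
      (by positivity : (0:ℝ) ≤ Br ^ 2)]
  exact width_core _ _ _ _ _ hrmin0 hx1' hx2' hy1' hy2' hz1' hz2' hsum'

/-- Every infeasible disk triple consumes at least as much horizontal space as the
narrowest infeasible triple `(r_min, r_max, r_min)`: for an integer `B > 12` divisible
by `4`, integers `a, b, c` with `B/4 + 1 ≤ a, b, c ≤ B/2 − 1` and `a + b + c ≥ B + 1`,
with `r(x) = 2 − 4/B + 12x/B²`, `r_min = 2 − 1/B + 12/B²`, `r_max = 2 + 2/B − 12/B²`,
one has `r(a) + r(c) + 2√(r(a)r(b)) + 2√(r(b)r(c)) ≥ 2r_min + 4√(r_max·r_min)`. -/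
theorem infeasible_triple_width_ge (B a b c : ℤ) (hB : 12 < B) (hdvd : 4 ∣ B)
    (ha1 : B / 4 + 1 ≤ a) (ha2 : a ≤ B / 2 - 1)
    (hb1 : B / 4 + 1 ≤ b) (hb2 : b ≤ B / 2 - 1)
    (hc1 : B / 4 + 1 ≤ c) (hc2 : c ≤ B / 2 - 1)
    (hsum : B + 1 ≤ a + b + c) :
    (2 - 4 / (B : ℝ) + 12 * (a : ℝ) / (B : ℝ) ^ 2) +
      (2 - 4 / (B : ℝ) + 12 * (c : ℝ) / (B : ℝ) ^ 2) +
      2 * Real.sqrt ((2 - 4 / (B : ℝ) + 12 * (a : ℝ) / (B : ℝ) ^ 2) *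
        (2 - 4 / (B : ℝ) + 12 * (b : ℝ) / (B : ℝ) ^ 2)) +
      2 * Real.sqrt ((2 - 4 / (B : ℝ) + 12 * (b : ℝ) / (B : ℝ) ^ 2) *
        (2 - 4 / (B : ℝ) + 12 * (c : ℝ) / (B : ℝ) ^ 2)) ≥
    2 * (2 - 1 / (B : ℝ) + 12 / (B : ℝ) ^ 2) +
      4 * Real.sqrt ((2 + 2 / (B : ℝ) - 12 / (B : ℝ) ^ 2) *
        (2 - 1 / (B : ℝ) + 12 / (B : ℝ) ^ 2)) := by
  obtain ⟨n, rfl⟩ := hdvd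
  have h4 : (4 * n : ℤ) / 4 = n := by
    rw [Int.mul_ediv_cancel_left _ (by norm_num)]
  have h2 : (4 * n : ℤ) / 2 = 2 * n := by
    rw [show (4 * n : ℤ) = 2 * (2 * n) by ring,
      Int.mul_ediv_cancel_left _ (by norm_num)]
  rw [h4] at ha1 hb1 hc1
  rw [h2] at ha2 hb2 hc2
  have hn4 : (4 : ℤ) ≤ n := by linarith
  apply width_real
  · have : (13 : ℤ) ≤ 4 * n := by linarith
    exact_mod_cast this
  · have : ((n : ℤ) : ℝ) + 1 ≤ (a : ℝ) := by exact_mod_cast ha1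
    push_cast at this ⊢; linarith
  · have : (a : ℝ) ≤ ((2 * n : ℤ) : ℝ) - 1 := by exact_mod_cast ha2
    push_cast at this ⊢; linarith
  · have : ((n : ℤ) : ℝ) + 1 ≤ (b : ℝ) := by exact_mod_cast hb1
    push_cast at this ⊢; linarith
  · have : (b : ℝ) ≤ ((2 * n : ℤ) : ℝ) - 1 := by exact_mod_cast hb2
    push_cast at this ⊢; linarith
  · have : ((n : ℤ) : ℝ) + 1 ≤ (c : ℝ) := by exact_mod_cast hc1
    push_cast at this ⊢; linarith
  · have : (c : ℝ) ≤ ((2 * n : ℤ) : ℝ) - 1 := by exact_mod_cast hc2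
    push_cast at this ⊢; linarith
  · have : ((4 * n : ℤ) : ℝ) + 1 ≤ ((a : ℝ) + b + c) := by exact_mod_cast hsum
    push_cast at this ⊢; linarith
end

section
/- Let B be a real number with B > 12 and let d be a real number with 0 ≤ d ≤ 1/(4B²). Setting R = 2 + 2/B and S = 2 − 1/B, one has 2·(√((R + S)² − (R − S)²) − √((R + S)² − (R + d − S)²)) ≤ 1/(4B²). (Placing a disk triple on the gap's bow, at height at most d above the chord, instead of on its chord saves at most 1/(4B²) units of horizontal space.) -/
/-- Placing a disk triple on the gap's bow instead of its chord, with the bow at height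
at most `d ≤ 1/(4B²)` above the chord, saves at most `1/(4B²)` horizontal space: with
`R = 2 + 2/B` and `S = 2 − 1/B`,
`2(√((R+S)² − (R−S)²) − √((R+S)² − (R+d−S)²)) ≤ 1/(4B²)`. -/
theorem bow_vs_chord_saving (B d : ℝ) (hB : 12 < B)
    (hd0 : 0 ≤ d) (hd : d ≤ 1 / (4 * B ^ 2)) :
    2 * (Real.sqrt (((2 + 2 / B) + (2 - 1 / B)) ^ 2 - ((2 + 2 / B) - (2 - 1 / B)) ^ 2) -
        Real.sqrt (((2 + 2 / B) + (2 - 1 / B)) ^ 2 - ((2 + 2 / B) + d - (2 - 1 / B)) ^ 2)) ≤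
      1 / (4 * B ^ 2) := by
  have hB0 : (0:ℝ) < B := by linarith
  set u : ℝ := 1 / B with hu'
  set w : ℝ := 1 / (4 * B ^ 2) with hw'
  set E1 : ℝ := ((2 + 2 / B) + (2 - 1 / B)) ^ 2 - ((2 + 2 / B) - (2 - 1 / B)) ^ 2 with hE1
  set E2 : ℝ := ((2 + 2 / B) + (2 - 1 / B)) ^ 2 - ((2 + 2 / B) + d - (2 - 1 / B)) ^ 2 with hE2
  clear_value u w E1 E2
  have hu0 : 0 < u := by rw [hu']; positivity
  have hu12 : u < 1 / 12 := by
    rw [hu', div_lt_div_iff₀ hB0 (by norm_num)]; linarith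
  have hw0 : 0 < w := by rw [hw']; positivity
  have hwu : w = u ^ 2 / 4 := by rw [hw', hu']; ring
  have hd576 : d ≤ 1 / 576 := by
    have : w ≤ 1 / 576 := by rw [hwu]; nlinarith
    linarith
  have hE1u : E1 = (4 + u) ^ 2 - (3 * u) ^ 2 := by rw [hE1, hu']; ring
  have hE2u : E2 = (4 + u) ^ 2 - (3 * u + d) ^ 2 := by rw [hE2, hu']; ring
  have h9 : (9:ℝ) ≤ E2 := by
    rw [hE2u]
    nlinarith [mul_nonneg hd0 hd0, mul_nonneg hu0.le hd0, mul_pos hu0 hu0]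
  have hE2nn : (0:ℝ) ≤ E2 := by linarith
  have hs2 : (3:ℝ) ≤ Real.sqrt E2 := by
    rw [show (3:ℝ) = Real.sqrt 9 by
      rw [show (9:ℝ) = 3 ^ 2 by norm_num, Real.sqrt_sq (by norm_num)]]
    exact Real.sqrt_le_sqrt h9
  have key : Real.sqrt E1 ≤ Real.sqrt E2 + w / 2 := by
    rw [Real.sqrt_le_iff]
    refine ⟨by positivity, ?_⟩
    have hsq : Real.sqrt E2 ^ 2 = E2 := Real.sq_sqrt hE2nn
    have hdiff : E1 - E2 = d * (6 * u + d) := by rw [hE1u, hE2u]; ring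
    have hbd : 6 * u + d ≤ 3 := by linarith
    have h1 : d * (6 * u + d) ≤ w * 3 :=
      mul_le_mul hd hbd (by positivity) hw0.le
    have h3w : w * 3 ≤ w * Real.sqrt E2 := mul_le_mul_of_nonneg_left hs2 hw0.le
    calc E1 ≤ E2 + w * Real.sqrt E2 + (w / 2) ^ 2 := by
            linarith [sq_nonneg (w / 2)]
      _ = (Real.sqrt E2 + w / 2) ^ 2 := by
            have : (Real.sqrt E2 + w / 2) ^ 2
                = Real.sqrt E2 ^ 2 + w * Real.sqrt E2 + (w / 2) ^ 2 := by ring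
            rw [this, hsq]
  have h2 : 2 * (w / 2) = w := by ring
  linarith
end

section
/- Let B be a real number with B > 12, let r_min = 2 − 1/B + 12/B², and let r_c be a real number with r_c ≥ 1/(8B²) + 2B²·(6 + r_min)² − r_min. Then r_c − (√((r_c + r_min)² − (6 + r_min)²) − r_min) ≤ 1/(4B²). (If the central disk radius is at least this polynomial bound, then the maximum distance d between a gap's bow and its chord is at most 1/(4B²).) -/
/-- If the central disk radius `r_c` is at least `1/(8B²) + 2B²(6 + r_min)² − r_min`,
then the maximum distance between a gap's bow and its chord,
`d = r_c − (√((r_c + r_min)² − (6 + r_min)²) − r_min)`, is at most `1/(4B²)`.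
Here `r_min = 2 − 1/B + 12/B²` and `B > 12`. -/
theorem bow_chord_distance_le (B r_c : ℝ) (hB : 12 < B)
    (hrc : 1 / (8 * B ^ 2) + 2 * B ^ 2 * (6 + (2 - 1 / B + 12 / B ^ 2)) ^ 2 -
      (2 - 1 / B + 12 / B ^ 2) ≤ r_c) :
    r_c - (Real.sqrt ((r_c + (2 - 1 / B + 12 / B ^ 2)) ^ 2 -
        (6 + (2 - 1 / B + 12 / B ^ 2)) ^ 2) - (2 - 1 / B + 12 / B ^ 2)) ≤
      1 / (4 * B ^ 2) := by
  have hB0 : (0:ℝ) < B := by linarith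
  have hb : (0:ℝ) < B ^ 2 := by positivity
  set r : ℝ := 2 - 1 / B + 12 / B ^ 2 with hr
  set a : ℝ := 6 + r with ha
  have hrpos : 0 < r := by
    have h1 : 1 / B < 1 / 12 := by
      apply one_div_lt_one_div_of_lt <;> linarith
    have h2 : 0 < 12 / B ^ 2 := by positivity
    rw [hr]; linarith
  have ha6 : 6 < a := by rw [ha]; linarith
  have hε : (0:ℝ) < 1 / (4 * B ^ 2) := by positivity
  have hs : 1 / (8 * B ^ 2) + 2 * B ^ 2 * a ^ 2 ≤ r_c + r := by linarith
  have h4 : 4 * B ^ 2 * (1 / (4 * B ^ 2)) = 1 := by field_simp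
  have h8 : 8 * B ^ 2 * (1 / (8 * B ^ 2)) = 1 := by field_simp
  have key : r_c + r - 1 / (4 * B ^ 2) ≤ Real.sqrt ((r_c + r) ^ 2 - a ^ 2) := by
    refine Real.le_sqrt_of_sq_le ?_
    have hmul := mul_le_mul_of_nonneg_right hs (le_of_lt hε)
    have e1 : 2 * B ^ 2 * a ^ 2 * (1 / (4 * B ^ 2)) = a ^ 2 / 2 := by
      field_simp; ring
    have e2 : 1 / (8 * B ^ 2) * (1 / (4 * B ^ 2)) = (1 / (4 * B ^ 2)) ^ 2 / 2 := by
      field_simp; ring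
    nlinarith [hmul, e1, e2]
  linarith
end
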